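/- Consider horse races with memory effects and side information: let Y (horses) and X (signals) be finite sets and P(x^n, y^n) a joint probability distribution on X^n × Y^n with all values strictly positive. For each race i let f_i(y_i | y^{i−1}, x^i) > 0 be betting fractions with Σ_{y_i ∈ Y} f_i(y_i | y^{i−1}, x^i) = 1, and let o_i(y_i | y^{i−1}) > 0 be the odds. Define the growth rate g_n = (1/n) Σ_{i=1}^n ln[f_i(y_i | y^{i−1}, x^i)·o_i(y_i | y^{i−1})]. Then ⟨exp[n·g_n − ln P(y^n) − i_{x^n→y^n} − ln o(y^n)]⟩_{(x^n,y^n)∼P} = 1, where o(y^n) = ∏_i o_i(y_i | y^{i−1}) and i_{x^n→y^n} = ln(P(y^n‖x^n)/P(y^n)) with P(y^n‖x^n) = ∏_i P(y_i | y^{i−1}, x^i). -/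

import Mathlib

/-- The causally conditioned factor `P(y_i | y^{i-1}, x^i)` of the joint distribution
`P(x^n, y^n)`, evaluated at the pair of sequences `(x, y)`. -/
noncomputable def condY {X Y : Type*} [Fintype X] [Fintype Y] [DecidableEq X]
    [DecidableEq Y] (n : ℕ)
    (P : (Fin n → X) → (Fin n → Y) → ℝ) (i : Fin n)
    (x : Fin n → X) (y : Fin n → Y) : ℝ :=
  (∑ x' : Fin n → X, ∑ y' : Fin n → Y,
      if (∀ j, j ≤ i → x' j = x j) ∧ (∀ j, j ≤ i → y' j = y j) then P x' y' else 0) /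
  (∑ x' : Fin n → X, ∑ y' : Fin n → Y,
      if (∀ j, j ≤ i → x' j = x j) ∧ (∀ j, j < i → y' j = y j) then P x' y' else 0)

/-!
The exponent is `ln (∏ᵢ fᵢ / P(yⁿ‖xⁿ))`: the odds cancel, and so does `P(yⁿ)`. By the chain rule
`P(xⁿ, yⁿ) = P(yⁿ‖xⁿ) P(xⁿ‖yⁿ⁻¹)`, each weighted summand is therefore
`∏ᵢ P(xᵢ | xⁱ⁻¹, yⁱ⁻¹) fᵢ(yᵢ | yⁱ⁻¹, xⁱ)`, a product of causal kernels, the `i`-th of which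
sums to one over `(xᵢ, yᵢ)`. Summing out the races from the last one backwards, every factor contributes `1`.
-/

open Finset Function

section PrefixMarginal

variable {X Y M : Type*} [Fintype X] [Fintype Y] [DecidableEq X] [DecidableEq Y] {n : ℕ}

/-- `prefixMarginal F k l x y` is the marginal `F(xᵏ, yˡ)`. -/
noncomputable def prefixMarginal [AddCommMonoid M] (F : (Fin n → X) → (Fin n → Y) → M)
    (k l : ℕ) (x : Fin n → X) (y : Fin n → Y) : M :=
  ∑ x', ∑ y', if (∀ j : Fin n, ↑j < k → x' j = x j) ∧ (∀ j : Fin n, ↑j < l → y' j = y j)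
    then F x' y' else 0

theorem forall_lt_succ_eq_update_iff {α : Type*} (m : Fin n) (x x' : Fin n → α) (a : α) :
    (∀ j : Fin n, (j : ℕ) < (m : ℕ) + 1 → x' j = update x m a j) ↔
      x' m = a ∧ ∀ j : Fin n, (j : ℕ) < m → x' j = x j := by
  constructor
  · intro h
    refine ⟨by simpa using h m (by omega), fun j hj => ?_⟩
    simpa [update_of_ne (Fin.ne_of_lt hj)] using h j (by omega)
  · rintro ⟨rfl, h⟩ j hj
    rcases Nat.lt_succ_iff_lt_or_eq.1 hj with hj | hj
    · rw [update_of_ne (Fin.ne_of_lt hj)]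
      exact h j hj
    · obtain rfl := Fin.ext hj
      simp

variable [AddCommMonoid M] (F : (Fin n → X) → (Fin n → Y) → M)

theorem prefixMarginal_zero_zero (x : Fin n → X) (y : Fin n → Y) :
    prefixMarginal F 0 0 x y = ∑ x', ∑ y', F x' y' := by
  simp [prefixMarginal]

theorem prefixMarginal_self (x : Fin n → X) (y : Fin n → Y) :
    prefixMarginal F n n x y = F x y := by
  simp [prefixMarginal, ← funext_iff, ite_and]

theorem prefixMarginal_congr {k l : ℕ} {x x' : Fin n → X} {y y' : Fin n → Y}
    (hx : ∀ j : Fin n, ↑j < k → x j = x' j) (hy : ∀ j : Fin n, ↑j < l → y j = y' j) :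
    prefixMarginal F k l x y = prefixMarginal F k l x' y' := by
  unfold prefixMarginal
  refine sum_congr rfl fun x'' _ => sum_congr rfl fun y'' _ => if_congr ?_ rfl rfl
  refine and_congr (forall_congr' fun j => imp_congr_right fun hj => ?_)
    (forall_congr' fun j => imp_congr_right fun hj => ?_)
  · rw [hx j hj]
  · rw [hy j hj]

theorem prefixMarginal_swap (k l : ℕ) (x : Fin n → X) (y : Fin n → Y) :
    prefixMarginal F k l x y = prefixMarginal (fun y x => F x y) l k y x := by
  unfold prefixMarginal
  rw [sum_comm]
  simp only [and_comm]

theorem prefixMarginal_eq_sum_update_fst (m : Fin n) (l : ℕ) (x : Fin n → X) (y : Fin n → Y) :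
    prefixMarginal F m l x y = ∑ a, prefixMarginal F ((m : ℕ) + 1) l (update x m a) y := by
  unfold prefixMarginal
  conv_rhs => rw [sum_comm]
  refine sum_congr rfl fun x' _ => ?_
  conv_rhs => rw [sum_comm]
  refine sum_congr rfl fun y' _ => ?_
  simp only [forall_lt_succ_eq_update_iff, and_assoc, ite_and, sum_ite_eq, mem_univ, if_true]

theorem prefixMarginal_eq_sum_update_snd (m : Fin n) (k : ℕ) (x : Fin n → X) (y : Fin n → Y) :
    prefixMarginal F k m x y = ∑ b, prefixMarginal F k ((m : ℕ) + 1) x (update y m b) := by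
  simp only [prefixMarginal_swap F k]
  exact prefixMarginal_eq_sum_update_fst (fun y x => F x y) m k y x

theorem prefixMarginal_eq_sum_sum_update (m : Fin n) (x : Fin n → X) (y : Fin n → Y) :
    prefixMarginal F m m x y =
      ∑ a, ∑ b, prefixMarginal F ((m : ℕ) + 1) ((m : ℕ) + 1) (update x m a) (update y m b) := by
  rw [prefixMarginal_eq_sum_update_fst]
  exact sum_congr rfl fun a _ => prefixMarginal_eq_sum_update_snd F m _ _ y

end PrefixMarginal

section CausalKernel

variable {X Y R : Type*} [Fintype X] [Fintype Y] [DecidableEq X] [DecidableEq Y]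
  [CommSemiring R] {n : ℕ} (K : Fin n → (Fin n → X) → (Fin n → Y) → R)

theorem prefixMarginal_prod_of_causal
    (hcausal : ∀ (i : Fin n) (x x' : Fin n → X) (y y' : Fin n → Y),
      (∀ j, j ≤ i → x j = x' j) → (∀ j, j ≤ i → y j = y' j) → K i x y = K i x' y')
    (hnorm : ∀ (i : Fin n) (x : Fin n → X) (y : Fin n → Y),
      ∑ a, ∑ b, K i (update x i a) (update y i b) = 1)
    {k : ℕ} (hk : k ≤ n) (x : Fin n → X) (y : Fin n → Y) :
    prefixMarginal (fun x y => ∏ i, K i x y) k k x y = ∏ i : Fin n with i.val < k, K i x y := by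
  induction hk using Nat.decreasingInduction generalizing x y with
  | self => simp [prefixMarginal_self]
  | of_succ k hk ih =>
    set m : Fin n := ⟨k, hk⟩
    have hsplit : univ.filter (fun i : Fin n => i.val < k + 1) =
        insert m (univ.filter fun i : Fin n => i.val < k) := by
      ext i
      simp only [mem_filter, mem_univ, true_and, mem_insert, Fin.ext_iff, m]
      omega
    have hm : m ∉ univ.filter fun i : Fin n => i.val < k := by simp [m]
    have hpast : ∀ a b, ∏ i : Fin n with i.val < k, K i (update x m a) (update y m b) =
        ∏ i : Fin n with i.val < k, K i x y := fun a b =>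
      prod_congr rfl fun i hi =>
        have hne : ∀ j, j ≤ i → j ≠ m := fun j hj =>
          Fin.ne_of_lt (lt_of_le_of_lt hj (mem_filter.1 hi).2)
        hcausal i _ _ _ _ (fun j hj => update_of_ne (hne j hj) _ _)
          (fun j hj => update_of_ne (hne j hj) _ _)
    calc prefixMarginal (fun x y => ∏ i, K i x y) k k x y
        = ∑ a, ∑ b, prefixMarginal (fun x y => ∏ i, K i x y) (k + 1) (k + 1)
            (update x m a) (update y m b) := prefixMarginal_eq_sum_sum_update _ m x y
      _ = ∑ a, ∑ b, K m (update x m a) (update y m b) *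
            ∏ i : Fin n with i.val < k, K i x y := by
        simp only [ih, hsplit, prod_insert hm, hpast]
      _ = ∏ i : Fin n with i.val < k, K i x y := by
        simp only [← sum_mul, hnorm, one_mul]

theorem sum_prod_of_causal [Nonempty (Fin n → X)] [Nonempty (Fin n → Y)]
    (hcausal : ∀ (i : Fin n) (x x' : Fin n → X) (y y' : Fin n → Y),
      (∀ j, j ≤ i → x j = x' j) → (∀ j, j ≤ i → y j = y' j) → K i x y = K i x' y')
    (hnorm : ∀ (i : Fin n) (x : Fin n → X) (y : Fin n → Y),
      ∑ a, ∑ b, K i (update x i a) (update y i b) = 1) :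
    ∑ x, ∑ y, ∏ i, K i x y = 1 := by
  rw [← prefixMarginal_zero_zero _ (Classical.arbitrary _) (Classical.arbitrary _),
    prefixMarginal_prod_of_causal K hcausal hnorm (Nat.zero_le n)]
  simp

end CausalKernel

/-- `condX n P i x y = P(xᵢ | xⁱ⁻¹, yⁱ⁻¹)`, so that `∏ i, condX n P i x y = P(xⁿ‖yⁿ⁻¹)`. -/
noncomputable def condX {X Y : Type*} [Fintype X] [Fintype Y] [DecidableEq X] [DecidableEq Y]
    (n : ℕ) (P : (Fin n → X) → (Fin n → Y) → ℝ) (i : Fin n)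
    (x : Fin n → X) (y : Fin n → Y) : ℝ :=
  prefixMarginal P ((i : ℕ) + 1) i x y / prefixMarginal P i i x y

section ChainRule

variable {X Y : Type*} [Fintype X] [Fintype Y] [DecidableEq X] [DecidableEq Y] {n : ℕ}
  {P : (Fin n → X) → (Fin n → Y) → ℝ}

theorem prefixMarginal_pos (hP : ∀ x y, 0 < P x y) (k l : ℕ) (x : Fin n → X) (y : Fin n → Y) :
    0 < prefixMarginal P k l x y := by
  have hnonneg : ∀ x' y', 0 ≤ if (∀ j : Fin n, ↑j < k → x' j = x j) ∧
      (∀ j : Fin n, ↑j < l → y' j = y j) then P x' y' else 0 := fun x' y' => by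
    split_ifs
    exacts [(hP x' y').le, le_rfl]
  calc 0 < P x y := hP x y
    _ ≤ ∑ y', if (∀ j : Fin n, ↑j < k → x j = x j) ∧ (∀ j : Fin n, ↑j < l → y' j = y j)
          then P x y' else 0 := by
        simpa using single_le_sum (fun y' _ => hnonneg x y') (mem_univ y)
    _ ≤ prefixMarginal P k l x y :=
        single_le_sum (fun x' _ => sum_nonneg fun y' _ => hnonneg x' y') (mem_univ x)

theorem condY_eq (i : Fin n) (x : Fin n → X) (y : Fin n → Y) :
    condY n P i x y =
      prefixMarginal P ((i : ℕ) + 1) ((i : ℕ) + 1) x y / prefixMarginal P ((i : ℕ) + 1) i x y := by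
  simp only [condY, prefixMarginal, Fin.le_def, Fin.lt_def, Nat.lt_add_one_iff]

theorem condY_pos (hP : ∀ x y, 0 < P x y) (i : Fin n) (x : Fin n → X) (y : Fin n → Y) :
    0 < condY n P i x y := by
  rw [condY_eq]
  exact div_pos (prefixMarginal_pos hP _ _ x y) (prefixMarginal_pos hP _ _ x y)

theorem condX_congr {i : Fin n} {x x' : Fin n → X} {y y' : Fin n → Y}
    (hx : ∀ j, j ≤ i → x j = x' j) (hy : ∀ j, j < i → y j = y' j) :
    condX n P i x y = condX n P i x' y' := by
  unfold condX
  rw [prefixMarginal_congr P (fun j hj => hx j (Nat.lt_add_one_iff.1 hj)) hy,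
    prefixMarginal_congr P (fun j hj => hx j (le_of_lt hj)) hy]

theorem sum_condX_update (hP : ∀ x y, 0 < P x y) (i : Fin n) (x : Fin n → X) (y : Fin n → Y) :
    ∑ a, condX n P i (update x i a) y = 1 := by
  have hpast : ∀ a, prefixMarginal P i i (update x i a) y = prefixMarginal P i i x y :=
    fun a => prefixMarginal_congr P (fun j hj => update_of_ne (Fin.ne_of_lt hj) _ _)
      (fun _ _ => rfl)
  simp only [condX, hpast, ← sum_div, ← prefixMarginal_eq_sum_update_fst]
  exact div_self (prefixMarginal_pos hP _ _ x y).ne'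

theorem sum_sum_condX_mul_eq_one (hP : ∀ x y, 0 < P x y) {g : (Fin n → X) → (Fin n → Y) → ℝ}
    (i : Fin n) (hg : ∀ x y, ∑ b, g x (update y i b) = 1) (x : Fin n → X) (y : Fin n → Y) :
    ∑ a, ∑ b, condX n P i (update x i a) (update y i b) * g (update x i a) (update y i b) = 1 := by
  have hcur : ∀ a b, condX n P i (update x i a) (update y i b) = condX n P i (update x i a) y :=
    fun a b => condX_congr (fun _ _ => rfl) fun j hj => update_of_ne (Fin.ne_of_lt hj) _ _
  simp only [hcur, ← mul_sum, hg, mul_one]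
  exact sum_condX_update hP i x y

theorem prod_condY_mul_prod_condX (hP : ∀ x y, 0 < P x y) (hPsum : ∑ x, ∑ y, P x y = 1)
    (x : Fin n → X) (y : Fin n → Y) :
    (∏ i, condY n P i x y) * ∏ i, condX n P i x y = P x y := by
  set g : ℕ → ℝ := fun k => prefixMarginal P k k x y
  have hg : ∀ k, g k ≠ 0 := fun k => (prefixMarginal_pos hP k k x y).ne'
  calc (∏ i, condY n P i x y) * ∏ i, condX n P i x y
      = ∏ k ∈ range n, g (k + 1) / g k := by
        rw [← prod_mul_distrib, ← Fin.prod_univ_eq_prod_range (fun k => g (k + 1) / g k)]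
        refine prod_congr rfl fun i _ => ?_
        rw [condY_eq, condX, div_mul_div_cancel₀ (prefixMarginal_pos hP _ _ x y).ne']
    _ = g n / g 0 := by
        simpa using congrArg Units.val (prod_range_div (fun k => Units.mk0 (g k) (hg k)) n)
    _ = P x y := by simp [g, prefixMarginal_self, prefixMarginal_zero_zero, hPsum]

end ChainRule

theorem exp_growth_exponent_eq {n : ℕ} (f o : Fin n → ℝ) (hf : ∀ i, 0 < f i) (ho : ∀ i, 0 < o i)
    {p c : ℝ} (hp : 0 < p) (hc : 0 < c) :
    Real.exp ((n : ℝ) * ((1 / (n : ℝ)) * ∑ i, Real.log (f i * o i)) - Real.log p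
      - Real.log (c / p) - Real.log (∏ i, o i)) = (∏ i, f i) / c := by
  have hmean : (n : ℝ) * ((1 / (n : ℝ)) * ∑ i, Real.log (f i * o i)) =
      ∑ i, Real.log (f i * o i) := by
    -- for `n = 0` the sum is empty, so the junk value `1 / 0 = 0` is harmless
    rcases n.eq_zero_or_pos with rfl | hn
    · simp
    · field_simp
  have hsum : Real.exp (∑ i, Real.log (f i * o i)) = (∏ i, f i) * ∏ i, o i := by
    rw [Real.exp_sum, ← prod_mul_distrib]
    exact prod_congr rfl fun i _ => Real.exp_log (mul_pos (hf i) (ho i))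
  have hO : 0 < ∏ i, o i := prod_pos fun i _ => ho i
  rw [hmean, Real.exp_sub, Real.exp_sub, Real.exp_sub, hsum, Real.exp_log hp,
    Real.exp_log (div_pos hc hp), Real.exp_log hO]
  field_simp [hO.ne']

theorem stmt17_general {X Y : Type*} [Fintype X] [Fintype Y] [DecidableEq X] [DecidableEq Y]
    (n : ℕ)
    (P : (Fin n → X) → (Fin n → Y) → ℝ)
    (hP : ∀ x y, 0 < P x y) (hPsum : ∑ x, ∑ y, P x y = 1)
    (f : Fin n → (Fin n → X) → (Fin n → Y) → ℝ)
    (hfpos : ∀ i x y, 0 < f i x y)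
    (hfcausal : ∀ (i : Fin n) (x x' : Fin n → X) (y y' : Fin n → Y),
      (∀ j, j ≤ i → x j = x' j) → (∀ j, j ≤ i → y j = y' j) → f i x y = f i x' y')
    (hfsum : ∀ (i : Fin n) (x : Fin n → X) (y : Fin n → Y),
      ∑ h : Y, f i x (Function.update y i h) = 1)
    (o : Fin n → (Fin n → Y) → ℝ)
    (hopos : ∀ i y, 0 < o i y) :
    ∑ x, ∑ y, P x y * Real.exp
        ((n : ℝ) * ((1 / (n : ℝ)) * ∑ i, Real.log (f i x y * o i y))
          - Real.log (∑ x', P x' y)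
          - Real.log ((∏ i, condY n P i x y) / (∑ x', P x' y))
          - Real.log (∏ i, o i y)) = 1 := by
  have hne : Nonempty (Fin n → X) ∧ Nonempty (Fin n → Y) := by
    by_contra h
    simp only [not_and_or, not_nonempty_iff] at h
    rcases h with h | h <;> simp at hPsum
  obtain ⟨_, _⟩ := hne
  calc _ = ∑ x, ∑ y, ∏ i, condX n P i x y * f i x y := by
        refine sum_congr rfl fun x _ => sum_congr rfl fun y _ => ?_
        have hcondY : 0 < ∏ i, condY n P i x y := prod_pos fun i _ => condY_pos hP i x y
        rw [exp_growth_exponent_eq (f · x y) (o · y) (hfpos · x y) (hopos · y)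
          (sum_pos (fun x' _ => hP x' y) univ_nonempty) hcondY,
          ← prod_condY_mul_prod_condX hP hPsum x y, prod_mul_distrib]
        field_simp [hcondY.ne']
    _ = 1 := by
        refine sum_prod_of_causal _ (fun i x x' y y' hx hy => ?_)
          (fun i x y => sum_sum_condX_mul_eq_one hP i (hfsum i) x y)
        rw [condX_congr hx fun j hj => hy j hj.le, hfcausal i x x' y y' hx hy]

/-- Jarzynski-type equality for horse races with memory effects and side information:
`⟨exp[n·g_n + s_{y^n} - i_{x^n→y^n} - ln o(y^n)]⟩ = 1`. Here `f i x y` is the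
fraction `f_i(y_i | y^{i-1}, x^i)` bet on horse `y i` in race `i` (depending only on
`x^i` and `y^i`, summing to 1 over the horse), and `o i y` is the odds
`o_i(y_i | y^{i-1})` (depending only on `y^i`). -/
theorem stmt17 {X Y : Type*} [Fintype X] [Fintype Y] [DecidableEq X] [DecidableEq Y]
    (n : ℕ) (hn : 0 < n)
    (P : (Fin n → X) → (Fin n → Y) → ℝ)
    (hP : ∀ x y, 0 < P x y) (hPsum : ∑ x, ∑ y, P x y = 1)
    (f : Fin n → (Fin n → X) → (Fin n → Y) → ℝ)
    (hfpos : ∀ i x y, 0 < f i x y)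
    (hfcausal : ∀ (i : Fin n) (x x' : Fin n → X) (y y' : Fin n → Y),
      (∀ j, j ≤ i → x j = x' j) → (∀ j, j ≤ i → y j = y' j) → f i x y = f i x' y')
    (hfsum : ∀ (i : Fin n) (x : Fin n → X) (y : Fin n → Y),
      ∑ h : Y, f i x (Function.update y i h) = 1)
    (o : Fin n → (Fin n → Y) → ℝ)
    (hopos : ∀ i y, 0 < o i y)
    (hocausal : ∀ (i : Fin n) (y y' : Fin n → Y),
      (∀ j, j ≤ i → y j = y' j) → o i y = o i y') :
    ∑ x, ∑ y, P x y * Real.exp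
        ((n : ℝ) * ((1 / (n : ℝ)) * ∑ i, Real.log (f i x y * o i y))
          - Real.log (∑ x', P x' y)
          - Real.log ((∏ i, condY n P i x y) / (∑ x', P x' y))
          - Real.log (∏ i, o i y)) = 1 :=
  stmt17_general n P hP hPsum f hfpos hfcausal hfsum o hopos
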